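/- Fix λ > 0 and r ∈ (0, 1/3). There exist constants C > 0 and h₀ > 0 such that for every h ∈ (0, h₀) with N := 1/(λh) a positive integer and every x ∈ ℝ, | (1/π) ∫_0^{h^{−r}} ( P_N(ξ(s)) − e^{−s²/2} ) cos(sx) ds | ≤ C h². -/

import Mathlib

open Real Finset MeasureTheory Filter Topology

/-!
On the low wave numbers `0 < s ≤ h^(-r)` one has `N·ξ(s) = O(s²h) ≤ 1/2`, so every factor of
`P_N(ξ)` has a convergent logarithm. Expanding `log(1 - mξ) - log(1 + (m+1)ξ)` to second order
and summing (the quadratic coefficients telescope) gives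
`log P_N(ξ) = -N²ξ + N²ξ²/2 + O(N⁴ξ³)`, while `N²ξ = (1 - cos(sh))/h² = s²/2 + O(s⁴h²)`.
Hence `P_N(ξ(s)) = e^{-s²/2} (1 + O((s⁴ + s⁶)h²))`, and since `(s⁴ + s⁶) e^{-s²/2}` is integrable
on `ℝ` the integral is `O(h²)` uniformly in `x`. The restriction `r < 1/3` is exactly what makes
`s⁶h²` small on the whole range.
-/

/-- The Crank–Nicolson Fourier symbol `P_N(ξ) = ∏_{m=0}^{N-1} (1 - mξ)/(1 + (m+1)ξ)`. -/
noncomputable def P (N : ℕ) (ξ : ℝ) : ℝ :=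
  ∏ m ∈ Finset.range N, (1 - (m : ℝ) * ξ) / (1 + ((m : ℝ) + 1) * ξ)

/-- `ξ(s) = 2λ² sin²(sh/2)`. -/
noncomputable def xi (lam h s : ℝ) : ℝ := 2 * lam ^ 2 * Real.sin (s * h / 2) ^ 2

lemma abs_log_one_add_sub_le {x : ℝ} (hx : |x| ≤ 1 / 2) :
    |log (1 + x) - (x - x ^ 2 / 2)| ≤ 2 * |x| ^ 3 := by
  have H := abs_log_sub_add_sum_range_le (x := -x) (by rw [abs_neg]; linarith) 2
  simp only [sum_range_succ, sum_range_zero, abs_neg, sub_neg_eq_add, Nat.reduceAdd] at H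
  have hden : |x| ^ 3 / (1 - |x|) ≤ 2 * |x| ^ 3 := by
    rw [div_le_iff₀ (by linarith)]
    nlinarith [pow_nonneg (abs_nonneg x) 3]
  calc |log (1 + x) - (x - x ^ 2 / 2)|
      = |0 + (-x) ^ 1 / ((0 : ℕ) + 1) + (-x) ^ 2 / ((1 : ℕ) + 1) + log (1 + x)| := by
        push_cast; ring_nf
    _ ≤ 2 * |x| ^ 3 := H.trans hden

lemma abs_sub_exp_le_of_abs_log_sub_le {p a : ℝ} (hp : 0 < p) (hpa : |log p - a| ≤ 1) :
    |p - exp a| ≤ 2 * |log p - a| * exp a := by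
  have hfactor : p - exp a = exp a * (exp (log p - a) - 1) := by
    rw [exp_sub, exp_log hp, mul_sub, mul_div_cancel₀ _ (exp_pos a).ne', mul_one]
  rw [hfactor, abs_mul, abs_of_pos (exp_pos a), mul_comm]
  gcongr
  exact abs_exp_sub_one_le hpa

section CrankNicolsonSymbol

variable {N : ℕ} {ξ : ℝ}

lemma P_factor_bounds (hξ : 0 ≤ ξ) {m : ℕ} (hm : m ∈ range N) :
    0 ≤ (m : ℝ) * ξ ∧ (m : ℝ) * ξ ≤ ((m : ℝ) + 1) * ξ ∧ ((m : ℝ) + 1) * ξ ≤ N * ξ := by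
  have hmN : (m : ℝ) + 1 ≤ N := by exact_mod_cast mem_range.mp hm
  refine ⟨by positivity, by nlinarith, mul_le_mul_of_nonneg_right hmN hξ⟩

lemma P_factor_pos (hξ : 0 ≤ ξ) (hNξ : N * ξ ≤ 1 / 2) {m : ℕ} (hm : m ∈ range N) :
    0 < (1 - (m : ℝ) * ξ) / (1 + ((m : ℝ) + 1) * ξ) := by
  obtain ⟨_, h1, h2⟩ := P_factor_bounds hξ hm
  exact div_pos (by linarith) (by linarith)

lemma P_pos (hξ : 0 ≤ ξ) (hNξ : N * ξ ≤ 1 / 2) : 0 < P N ξ :=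
  prod_pos fun _ hm => P_factor_pos hξ hNξ hm

lemma abs_log_P_add_le (hξ : 0 ≤ ξ) (hNξ : N * ξ ≤ 1 / 2) :
    |log (P N ξ) + N ^ 2 * (ξ - ξ ^ 2 / 2)| ≤ 4 * N * (N * ξ) ^ 3 := by
  set q : ℕ → ℝ := fun k => (k : ℝ) ^ 2 * (ξ - ξ ^ 2 / 2)
  have hterm : ∀ m ∈ range N,
      |log ((1 - m * ξ) / (1 + (m + 1) * ξ)) + (q (m + 1) - q m)| ≤ 4 * (N * ξ) ^ 3 := by
    intro m hm
    obtain ⟨h0, h1, h2⟩ := P_factor_bounds hξ hm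
    have hsub := abs_log_one_add_sub_le (x := -(m * ξ))
      (by rw [abs_neg, abs_of_nonneg h0]; linarith)
    have hadd := abs_log_one_add_sub_le (x := (m + 1) * ξ)
      (by rw [abs_of_nonneg (by linarith)]; linarith)
    rw [abs_neg, abs_of_nonneg h0] at hsub
    rw [abs_of_nonneg (a := ((m : ℝ) + 1) * ξ) (by linarith)] at hadd
    have hcube₁ : ((m : ℝ) * ξ) ^ 3 ≤ (N * ξ) ^ 3 := pow_le_pow_left₀ h0 (by linarith) 3
    have hcube₂ : (((m : ℝ) + 1) * ξ) ^ 3 ≤ (N * ξ) ^ 3 := pow_le_pow_left₀ (by linarith) h2 3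
    rw [log_div (by linarith) (by linarith)]
    calc _ = |(log (1 + -(m * ξ)) - (-(m * ξ) - (-(m * ξ)) ^ 2 / 2))
          - (log (1 + (m + 1) * ξ) - ((m + 1) * ξ - ((m + 1) * ξ) ^ 2 / 2))| := by
          simp only [q]; push_cast; ring_nf
      _ ≤ _ := abs_sub _ _
      _ ≤ 4 * (N * ξ) ^ 3 := by linarith
  have hlog : log (P N ξ) = ∑ m ∈ range N, log ((1 - m * ξ) / (1 + (m + 1) * ξ)) :=
    log_prod fun _ hm => (P_factor_pos hξ hNξ hm).ne'
  calc _ = |∑ m ∈ range N, (log ((1 - m * ξ) / (1 + (m + 1) * ξ)) + (q (m + 1) - q m))| := by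
        rw [sum_add_distrib, sum_range_sub, hlog]; simp [q]
    _ ≤ ∑ m ∈ range N, 4 * (N * ξ) ^ 3 := (abs_sum_le_sum_abs _ _).trans (sum_le_sum hterm)
    _ = 4 * N * (N * ξ) ^ 3 := by rw [sum_const, card_range, nsmul_eq_mul]; ring

variable {lam h s : ℝ}

lemma xi_nonneg : 0 ≤ xi lam h s := by
  unfold xi; positivity

lemma natCast_mul_xi_le (hN : lam * N * h = 1) : N * xi lam h s ≤ lam * s ^ 2 * h / 2 := by
  have hsin : sin (s * h / 2) ^ 2 ≤ (s * h / 2) ^ 2 := sin_sq_le_sq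
  calc N * xi lam h s ≤ N * (2 * lam ^ 2 * (s * h / 2) ^ 2) := by unfold xi; gcongr
    _ = (lam * N * h) * (lam * s ^ 2 * h / 2) := by ring
    _ = lam * s ^ 2 * h / 2 := by rw [hN, one_mul]

lemma abs_sq_mul_xi_sub_le (hN : lam * N * h = 1) (hsh : |s * h| ≤ 1) :
    |N ^ 2 * xi lam h s - s ^ 2 / 2| ≤ 5 / 96 * s ^ 4 * h ^ 2 := by
  have hh : h ≠ 0 := by rintro rfl; simp at hN
  have hh2 : 0 < h ^ 2 := by positivity
  have hsin : sin (s * h / 2) ^ 2 = 1 / 2 - cos (s * h) / 2 := by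
    rw [sin_sq_eq_half_sub]; ring_nf
  have hdiff : N ^ 2 * xi lam h s - s ^ 2 / 2 = -(cos (s * h) - (1 - (s * h) ^ 2 / 2)) / h ^ 2 := by
    rw [eq_div_iff hh2.ne', xi, hsin]
    linear_combination (1 - cos (s * h)) * (lam * N * h + 1) * hN
  rw [hdiff, abs_div, abs_neg, abs_of_pos hh2, div_le_iff₀ hh2]
  calc _ ≤ |s * h| ^ 4 * (5 / 96) := cos_bound hsh
    _ = 5 / 96 * s ^ 4 * h ^ 2 * h ^ 2 := by rw [pow_abs, abs_of_nonneg (by positivity)]; ring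

lemma abs_log_P_xi_add_le (hN : lam * N * h = 1) (hsh : |s * h| ≤ 1) (hs2h : lam * s ^ 2 * h ≤ 1) :
    0 < P N (xi lam h s) ∧
      |log (P N (xi lam h s)) + s ^ 2 / 2| ≤ (1 + lam ^ 2) * (s ^ 4 + s ^ 6) * h ^ 2 := by
  set ξ := xi lam h s
  have hξ : 0 ≤ ξ := xi_nonneg
  have hNξ : N * ξ ≤ lam * s ^ 2 * h / 2 := natCast_mul_xi_le hN
  have hNξ0 : 0 ≤ N * ξ := by positivity
  have hlog := abs_log_P_add_le hξ (hNξ.trans (by linarith))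
  have hcos := abs_sq_mul_xi_sub_le (s := s) hN hsh
  have hcube : 4 * N * (N * ξ) ^ 3 ≤ lam ^ 2 * s ^ 6 * h ^ 2 / 2 :=
    calc 4 * N * (N * ξ) ^ 3 ≤ 4 * N * (lam * s ^ 2 * h / 2) ^ 3 := by gcongr
      _ = (lam * N * h) * (lam ^ 2 * s ^ 6 * h ^ 2 / 2) := by ring
      _ = lam ^ 2 * s ^ 6 * h ^ 2 / 2 := by rw [hN, one_mul]
  have hsq : (N * ξ) ^ 2 ≤ (lam * s ^ 2 * h / 2) ^ 2 := pow_le_pow_left₀ hNξ0 hNξ 2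
  refine ⟨P_pos hξ (hNξ.trans (by linarith)), ?_⟩
  calc _ = |(log (P N ξ) + N ^ 2 * (ξ - ξ ^ 2 / 2)) + (N * ξ) ^ 2 / 2
          - (N ^ 2 * ξ - s ^ 2 / 2)| := by ring_nf
    _ ≤ |log (P N ξ) + N ^ 2 * (ξ - ξ ^ 2 / 2)| + |(N * ξ) ^ 2 / 2| + |N ^ 2 * ξ - s ^ 2 / 2| :=
        (abs_sub _ _).trans (add_le_add_left (abs_add_le _ _) _)
    _ ≤ (1 + lam ^ 2) * (s ^ 4 + s ^ 6) * h ^ 2 := by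
        rw [abs_of_nonneg (by positivity : (0 : ℝ) ≤ (N * ξ) ^ 2 / 2)]
        nlinarith [mul_nonneg (sq_nonneg lam) (by positivity : (0 : ℝ) ≤ s ^ 4 * h ^ 2),
          (by positivity : (0 : ℝ) ≤ s ^ 4 * h ^ 2), (by positivity : (0 : ℝ) ≤ s ^ 6 * h ^ 2)]

lemma abs_P_xi_sub_exp_le (hN : lam * N * h = 1) (hsh : |s * h| ≤ 1)
    (hs2h : lam * s ^ 2 * h ≤ 1) (hsmall : (1 + lam ^ 2) * (s ^ 4 + s ^ 6) * h ^ 2 ≤ 1) :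
    |P N (xi lam h s) - exp (-s ^ 2 / 2)| ≤
      2 * (1 + lam ^ 2) * h ^ 2 * ((s ^ 4 + s ^ 6) * exp (-s ^ 2 / 2)) := by
  obtain ⟨hpos, hlog⟩ := abs_log_P_xi_add_le hN hsh hs2h
  rw [← sub_neg_eq_add, ← neg_div] at hlog
  calc _ ≤ 2 * |log (P N (xi lam h s)) - -s ^ 2 / 2| * exp (-s ^ 2 / 2) :=
        abs_sub_exp_le_of_abs_log_sub_le hpos (hlog.trans hsmall)
    _ ≤ 2 * ((1 + lam ^ 2) * (s ^ 4 + s ^ 6) * h ^ 2) * exp (-s ^ 2 / 2) := by gcongr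
    _ = _ := by ring

end CrankNicolsonSymbol

lemma small_params_of_le {lam h s T : ℝ} (hlam : 0 ≤ lam) (hh : 0 < h) (hs : 0 ≤ s) (hsT : s ≤ T)
    (hT : 1 ≤ T) (hK : (1 + lam + 2 * (1 + lam ^ 2)) * (T ^ 3 * h) ≤ 1) :
    |s * h| ≤ 1 ∧ lam * s ^ 2 * h ≤ 1 ∧ (1 + lam ^ 2) * (s ^ 4 + s ^ 6) * h ^ 2 ≤ 1 := by
  set u := T ^ 3 * h
  have hu : 0 ≤ u := by positivity
  have hu1 : u ≤ 1 := by
    nlinarith [mul_nonneg hlam hu, sq_nonneg lam, mul_nonneg (sq_nonneg lam) hu]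
  have hT3 : T ≤ T ^ 3 := le_self_pow₀ hT (by norm_num)
  have hs2 : s ^ 2 ≤ T ^ 3 := (pow_le_pow_left₀ hs hsT 2).trans (pow_le_pow_right₀ hT (by norm_num))
  have hs4 : s ^ 4 ≤ T ^ 6 := (pow_le_pow_left₀ hs hsT 4).trans (pow_le_pow_right₀ hT (by norm_num))
  have hs6 : s ^ 6 ≤ T ^ 6 := pow_le_pow_left₀ hs hsT 6
  refine ⟨?_, ?_, ?_⟩
  · rw [abs_of_nonneg (by positivity)]
    nlinarith
  · calc lam * s ^ 2 * h ≤ lam * u := by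
          simp only [u]; rw [mul_assoc]; gcongr
      _ ≤ 1 := by nlinarith [mul_nonneg (sq_nonneg lam) hu]
  · calc (1 + lam ^ 2) * (s ^ 4 + s ^ 6) * h ^ 2 ≤ (1 + lam ^ 2) * (2 * T ^ 6) * h ^ 2 := by
          gcongr; linarith
      _ = 2 * (1 + lam ^ 2) * u * u := by ring
      _ ≤ 2 * (1 + lam ^ 2) * u := mul_le_of_le_one_right (by positivity) hu1
      _ ≤ 1 := by nlinarith [mul_nonneg hlam hu]

lemma exists_forall_rpow_small (K : ℝ) {p : ℝ} (hp : 0 < p) :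
    ∃ h₀ > 0, ∀ h ∈ Set.Ioo 0 h₀, h < 1 ∧ K * h ^ p ≤ 1 := by
  have hlim : Tendsto (fun h : ℝ => K * h ^ p) (𝓝 0) (𝓝 0) := by
    simpa only [zero_rpow hp.ne', mul_zero] using
      ((continuousAt_rpow_const 0 p (Or.inr hp.le)).tendsto).const_mul K
  have hev : ∀ᶠ h in 𝓝 (0 : ℝ), h < 1 ∧ K * h ^ p ≤ 1 :=
    (gt_mem_nhds one_pos).and (hlim.eventually (ge_mem_nhds one_pos))
  exact (nhdsGT_basis (0 : ℝ)).eventually_iff.mp (nhdsWithin_le_nhds hev)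

lemma integrable_pow_mul_exp_neg_sq_div_two (n : ℕ) :
    Integrable fun s : ℝ => s ^ n * exp (-s ^ 2 / 2) := by
  refine (integrable_rpow_mul_exp_neg_mul_sq (b := 1 / 2) (by norm_num) (s := n)
    (by linarith [n.cast_nonneg (α := ℝ)])).congr (ae_of_all _ fun s => ?_)
  simp only [rpow_natCast]
  ring_nf

lemma integrable_pow_four_add_pow_six_mul_exp :
    Integrable fun s : ℝ => (s ^ 4 + s ^ 6) * exp (-s ^ 2 / 2) := by
  refine ((integrable_pow_mul_exp_neg_sq_div_two 4).add
    (integrable_pow_mul_exp_neg_sq_div_two 6)).congr (ae_of_all _ fun s => ?_)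
  simp only [Pi.add_apply, add_mul]

lemma abs_intervalIntegral_le_mul_integral {f g : ℝ → ℝ} {T c : ℝ} (hT : 0 ≤ T) (hc : 0 ≤ c)
    (hg : Integrable g) (hg0 : 0 ≤ g) (hfg : ∀ s ∈ Set.Ioc 0 T, |f s| ≤ c * g s) :
    |∫ s in 0..T, f s| ≤ c * ∫ s, g s :=
  calc |∫ s in 0..T, f s| ≤ ∫ s in 0..T, c * g s :=
        intervalIntegral.norm_integral_le_of_norm_le (f := f) hT (ae_of_all _ hfg)
          (hg.const_mul c).intervalIntegrable
    _ = c * ∫ s in Set.Ioc 0 T, g s := by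
        rw [intervalIntegral.integral_const_mul, intervalIntegral.integral_of_le hT]
    _ ≤ c * ∫ s, g s := mul_le_mul_of_nonneg_left (setIntegral_le_integral hg (ae_of_all _ hg0)) hc

/-- the contribution of the low wave number regime (regime I) to the
inverse Fourier representation of the error is `O(h²)`, uniformly in `x`. -/
theorem stmt2 (lam r : ℝ) (hlam : 0 < lam) (hr : 0 < r) (hr3 : r < 1 / 3) :
    ∃ C > (0 : ℝ), ∃ h₀ > (0 : ℝ), ∀ h : ℝ, 0 < h → h < h₀ → ∀ N : ℕ, 0 < N →
      (N : ℝ) = 1 / (lam * h) → ∀ x : ℝ,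
      |(1 / Real.pi) * ∫ s in (0 : ℝ)..(h ^ (-r)),
          (P N (xi lam h s) - Real.exp (-s ^ 2 / 2)) * Real.cos (s * x)|
        ≤ C * h ^ 2 := by
  set g : ℝ → ℝ := fun s => (s ^ 4 + s ^ 6) * exp (-s ^ 2 / 2)
  have hg0 : 0 ≤ g := fun s => by positivity
  have hI : 0 ≤ ∫ s, g s := integral_nonneg hg0
  obtain ⟨h₀, hh₀, hsmall⟩ :=
    exists_forall_rpow_small (1 + lam + 2 * (1 + lam ^ 2)) (p := 1 - 3 * r) (by linarith)
  refine ⟨2 * (1 + lam ^ 2) * (∫ s, g s) + 1, by positivity, h₀, hh₀,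
    fun h hh hlt N _ hN x => ?_⟩
  obtain ⟨h1, hK⟩ := hsmall h ⟨hh, hlt⟩
  have hNh : lam * N * h = 1 := by rw [hN]; field_simp
  have hT : 1 ≤ h ^ (-r) := one_le_rpow_of_pos_of_le_one_of_nonpos hh h1.le (by linarith)
  have hT3 : (h ^ (-r)) ^ 3 * h = h ^ (1 - 3 * r) := by
    rw [← rpow_natCast, ← rpow_mul hh.le, ← rpow_add_one hh.ne']; ring_nf
  have hpt : ∀ s ∈ Set.Ioc 0 (h ^ (-r)),
      |(P N (xi lam h s) - exp (-s ^ 2 / 2)) * cos (s * x)| ≤ 2 * (1 + lam ^ 2) * h ^ 2 * g s := by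
    rintro s ⟨hs, hsT⟩
    obtain ⟨hsh, hs2h, hB⟩ := small_params_of_le hlam.le hh hs.le hsT hT (by rwa [hT3])
    rw [abs_mul]
    exact (mul_le_of_le_one_right (abs_nonneg _) (abs_cos_le_one _)).trans
      (abs_P_xi_sub_exp_le hNh hsh hs2h hB)
  have hpi : |1 / π| ≤ 1 := by
    rw [abs_of_pos (by positivity), div_le_one pi_pos]; linarith [pi_gt_three]
  calc _ ≤ |∫ s in (0 : ℝ)..(h ^ (-r)), (P N (xi lam h s) - exp (-s ^ 2 / 2)) * cos (s * x)| := by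
        rw [abs_mul]; exact mul_le_of_le_one_left (abs_nonneg _) hpi
    _ ≤ 2 * (1 + lam ^ 2) * h ^ 2 * ∫ s, g s := abs_intervalIntegral_le_mul_integral
        (by positivity) (by positivity) integrable_pow_four_add_pow_six_mul_exp hg0 hpt
    _ ≤ (2 * (1 + lam ^ 2) * (∫ s, g s) + 1) * h ^ 2 := by nlinarith [sq_nonneg h]
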